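/- Define the vector field w : R^2 → R^2 by w(x_1,x_2) = (0, 4x_1) if 1/2 > |x_1| > |x_2|, w(x_1,x_2) = (−4x_2, 0) if 1/2 > |x_2| > |x_1|, and w(x_1,x_2) = (0,0) otherwise. Then w is bounded and divergence-free in the sense of distributions: for every smooth compactly supported function φ : R^2 → R, ∫_{R^2} w(x)·∇φ(x) dx = 0. -/

import Mathlib

open MeasureTheory Filter Topology

noncomputable section

open scoped Classical in
/-- The building block of Depauw's vector field:
`w(x₁,x₂) = (0, 4x₁)` if `1/2 > |x₁| > |x₂|`, `w(x₁,x₂) = (-4x₂, 0)` if `1/2 > |x₂| > |x₁|`,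
and `w = 0` otherwise. -/
def wDP : ℝ × ℝ → ℝ × ℝ := fun x =>
  if |x.1| < 1 / 2 ∧ |x.2| < |x.1| then (0, 4 * x.1)
  else if |x.2| < 1 / 2 ∧ |x.1| < |x.2| then (-(4 * x.2), 0)
  else (0, 0)

/-- `w` is bounded and divergence-free in the sense of distributions:
`∫_{ℝ²} w·∇φ = 0` for every smooth compactly supported `φ : ℝ² → ℝ`. -/
theorem stmt_19 :
    (∃ C : ℝ, ∀ x : ℝ × ℝ, ‖wDP x‖ ≤ C) ∧
    ∀ φ : ℝ × ℝ → ℝ, ContDiff ℝ (⊤ : ℕ∞) φ → HasCompactSupport φ →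
      ∫ x : ℝ × ℝ,
        ((wDP x).1 * fderiv ℝ φ x (1, 0) + (wDP x).2 * fderiv ℝ φ x (0, 1)) = 0 := by
  constructor
  · refine ⟨2, fun x => ?_⟩
    unfold wDP
    split_ifs with h1 h2
    · rw [Prod.norm_def]
      simp only [norm_zero, Real.norm_eq_abs]
      rw [max_le_iff]
      refine ⟨by norm_num, ?_⟩
      rw [abs_mul, abs_of_nonneg (by norm_num : (0:ℝ) ≤ 4)]
      nlinarith [h1.1, abs_nonneg x.1]
    · rw [Prod.norm_def]
      simp only [norm_zero, Real.norm_eq_abs]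
      rw [max_le_iff]
      refine ⟨?_, by norm_num⟩
      rw [abs_neg, abs_mul, abs_of_nonneg (by norm_num : (0:ℝ) ≤ 4)]
      nlinarith [h2.1, abs_nonneg x.2]
    · simp [Prod.norm_def]
  · intro φ hφ hsupp
    set D := fderiv ℝ φ with hDdef
    have hDc : Continuous D := hφ.continuous_fderiv (by simp)
    have hDsupp : HasCompactSupport D := hsupp.fderiv (𝕜 := ℝ)
    have hφc : Continuous φ := hφ.continuous
    -- the two regions
    set S1 : Set (ℝ × ℝ) := {x | |x.1| < 1 / 2 ∧ |x.2| < |x.1|} with hS1def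
    set S2 : Set (ℝ × ℝ) := {x | |x.2| < 1 / 2 ∧ |x.1| < |x.2|} with hS2def
    have hS1 : MeasurableSet S1 := by
      apply MeasurableSet.inter
      · exact measurableSet_lt (continuous_abs.comp continuous_fst).measurable measurable_const
      · exact measurableSet_lt (continuous_abs.comp continuous_snd).measurable
          (continuous_abs.comp continuous_fst).measurable
    have hS2 : MeasurableSet S2 := by
      apply MeasurableSet.inter
      · exact measurableSet_lt (continuous_abs.comp continuous_snd).measurable measurable_const
      · exact measurableSet_lt (continuous_abs.comp continuous_fst).measurable
          (continuous_abs.comp continuous_snd).measurable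
    set g1 : ℝ × ℝ → ℝ := fun x => 4 * x.1 * D x (0, 1) with hg1def
    set g2 : ℝ × ℝ → ℝ := fun x => -(4 * x.2) * D x (1, 0) with hg2def
    have hg1c : Continuous g1 := by
      exact (continuous_const.mul continuous_fst).mul (hDc.clm_apply continuous_const)
    have hg2c : Continuous g2 := by
      exact ((continuous_const.mul continuous_snd).neg).mul (hDc.clm_apply continuous_const)
    have hDv : ∀ v : ℝ × ℝ, HasCompactSupport (fun x => D x v) := by
      intro v
      exact hDsupp.comp_left (g := fun L : ℝ × ℝ →L[ℝ] ℝ => L v) rfl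
    have hg1supp : HasCompactSupport g1 := by
      exact (hDv (0, 1)).mul_left
    have hg2supp : HasCompactSupport g2 := by
      exact (hDv (1, 0)).mul_left
    have hg1i : Integrable g1 := hg1c.integrable_of_hasCompactSupport hg1supp
    have hg2i : Integrable g2 := hg2c.integrable_of_hasCompactSupport hg2supp
    set G1 : ℝ × ℝ → ℝ := S1.indicator g1 with hG1def
    set G2 : ℝ × ℝ → ℝ := S2.indicator g2 with hG2def
    have hG1i : Integrable G1 := hg1i.indicator hS1
    have hG2i : Integrable G2 := hg2i.indicator hS2
    -- pointwise decomposition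
    have hFeq : ∀ x : ℝ × ℝ,
        (wDP x).1 * D x (1, 0) + (wDP x).2 * D x (0, 1) = G1 x + G2 x := by
      intro x
      simp only [wDP, hG1def, hG2def, Set.indicator_apply, hS1def, hS2def, Set.mem_setOf_eq,
        hg1def, hg2def]
      split_ifs with h1 h2 h2
      · exact absurd h2.2 (not_lt.2 h1.2.le)
      · simp
      · simp
      · simp
    -- derivative along vertical / horizontal lines
    have hdiff : Differentiable ℝ φ := hφ.differentiable (by simp)
    have hd2 : ∀ a b : ℝ, HasDerivAt (fun b => φ (a, b)) (D (a, b) (0, 1)) b := by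
      intro a b
      have h1 : HasFDerivAt φ (D (a, b)) (a, b) := (hdiff (a, b)).hasFDerivAt
      have h2 : HasDerivAt (fun b : ℝ => ((a, b) : ℝ × ℝ)) ((0 : ℝ), (1 : ℝ)) b :=
        HasDerivAt.prodMk (hasDerivAt_const b a) (hasDerivAt_id b)
      exact h1.comp_hasDerivAt b h2
    have hd1 : ∀ a b : ℝ, HasDerivAt (fun a => φ (a, b)) (D (a, b) (1, 0)) a := by
      intro a b
      have h1 : HasFDerivAt φ (D (a, b)) (a, b) := (hdiff (a, b)).hasFDerivAt
      have h2 : HasDerivAt (fun a : ℝ => ((a, b) : ℝ × ℝ)) ((1 : ℝ), (0 : ℝ)) a :=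
        HasDerivAt.prodMk (hasDerivAt_id a) (hasDerivAt_const a b)
      exact h1.comp_hasDerivAt a h2
    -- the two 1-d profiles
    set h1fun : ℝ → ℝ := (Set.Ioo (-(1/2) : ℝ) (1/2)).indicator
      (fun a => 4 * a * (φ (a, |a|) - φ (a, -|a|))) with hh1def
    set h2fun : ℝ → ℝ := (Set.Ioo (-(1/2) : ℝ) (1/2)).indicator
      (fun b => -(4 * b) * (φ (|b|, b) - φ (-|b|, b))) with hh2def
    have memIoo : ∀ t : ℝ, t ∈ Set.Ioo (-(1/2) : ℝ) (1/2) ↔ |t| < 1/2 := by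
      intro t; rw [Set.mem_Ioo, abs_lt]
    -- inner integral for G1
    have inner1 : ∀ a : ℝ, (∫ b, G1 (a, b)) = h1fun a := by
      intro a
      by_cases ha : |a| < 1/2
      · have hrw : (fun b => G1 (a, b)) =
            (Set.Ioo (-|a|) |a|).indicator (fun b => g1 (a, b)) := by
          funext b
          simp only [hG1def, Set.indicator_apply, hS1def, Set.mem_setOf_eq, Set.mem_Ioo]
          have : (|a| < 1/2 ∧ |b| < |a|) ↔ (-|a| < b ∧ b < |a|) := by
            rw [and_iff_right ha, abs_lt]
          by_cases hb : -|a| < b ∧ b < |a|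
          · rw [if_pos (this.2 hb), if_pos hb]
          · rw [if_neg (fun h => hb (this.1 h)), if_neg hb]
        rw [hrw, integral_indicator measurableSet_Ioo]
        have hle : -|a| ≤ |a| := by have := abs_nonneg a; linarith
        rw [← integral_Ioc_eq_integral_Ioo, ← intervalIntegral.integral_of_le hle]
        have hint1 : IntervalIntegrable (fun b => D (a, b) (0, 1)) volume (-|a|) |a| :=
          ((hDc.clm_apply continuous_const).comp
            (continuous_const.prodMk continuous_id)).intervalIntegrable _ _
        have hkey : (∫ b in (-|a|)..|a|, D (a, b) (0, 1)) = φ (a, |a|) - φ (a, -|a|) :=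
          intervalIntegral.integral_eq_sub_of_hasDerivAt (fun b _ => hd2 a b) hint1
        calc (∫ b in (-|a|)..|a|, g1 (a, b))
            = 4 * a * ∫ b in (-|a|)..|a|, D (a, b) (0, 1) := by
              rw [← intervalIntegral.integral_const_mul]
          _ = 4 * a * (φ (a, |a|) - φ (a, -|a|)) := by rw [hkey]
          _ = h1fun a := by
              rw [hh1def, Set.indicator_of_mem ((memIoo a).2 ha)]
      · have hz : (fun b => G1 (a, b)) = fun _ => (0 : ℝ) := by
          funext b
          simp only [hG1def, Set.indicator_apply, hS1def, Set.mem_setOf_eq]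
          rw [if_neg (fun h => ha h.1)]
        rw [hz, integral_zero, hh1def,
          Set.indicator_of_notMem (fun h => ha ((memIoo a).1 h))]
    -- inner integral for G2
    have inner2 : ∀ b : ℝ, (∫ a, G2 (a, b)) = h2fun b := by
      intro b
      by_cases hb : |b| < 1/2
      · have hrw : (fun a => G2 (a, b)) =
            (Set.Ioo (-|b|) |b|).indicator (fun a => g2 (a, b)) := by
          funext a
          simp only [hG2def, Set.indicator_apply, hS2def, Set.mem_setOf_eq, Set.mem_Ioo]
          have : (|b| < 1/2 ∧ |a| < |b|) ↔ (-|b| < a ∧ a < |b|) := by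
            rw [and_iff_right hb, abs_lt]
          by_cases haa : -|b| < a ∧ a < |b|
          · rw [if_pos (this.2 haa), if_pos haa]
          · rw [if_neg (fun h => haa (this.1 h)), if_neg haa]
        rw [hrw, integral_indicator measurableSet_Ioo]
        have hle : -|b| ≤ |b| := by have := abs_nonneg b; linarith
        rw [← integral_Ioc_eq_integral_Ioo, ← intervalIntegral.integral_of_le hle]
        have hint2 : IntervalIntegrable (fun a => D (a, b) (1, 0)) volume (-|b|) |b| :=
          ((hDc.clm_apply continuous_const).comp
            (continuous_id.prodMk continuous_const)).intervalIntegrable _ _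
        have hkey : (∫ a in (-|b|)..|b|, D (a, b) (1, 0)) = φ (|b|, b) - φ (-|b|, b) :=
          intervalIntegral.integral_eq_sub_of_hasDerivAt (fun a _ => hd1 a b) hint2
        calc (∫ a in (-|b|)..|b|, g2 (a, b))
            = -(4 * b) * ∫ a in (-|b|)..|b|, D (a, b) (1, 0) := by
              rw [← intervalIntegral.integral_const_mul]
          _ = -(4 * b) * (φ (|b|, b) - φ (-|b|, b)) := by rw [hkey]
          _ = h2fun b := by
              rw [hh2def, Set.indicator_of_mem ((memIoo b).2 hb)]
      · have hz : (fun a => G2 (a, b)) = fun _ => (0 : ℝ) := by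
          funext a
          simp only [hG2def, Set.indicator_apply, hS2def, Set.mem_setOf_eq]
          rw [if_neg (fun h => hb h.1)]
        rw [hz, integral_zero, hh2def,
          Set.indicator_of_notMem (fun h => hb ((memIoo b).1 h))]
    -- Fubini
    have fub1 : (∫ x : ℝ × ℝ, G1 x) = ∫ a, ∫ b, G1 (a, b) := by
      rw [Measure.volume_eq_prod]
      exact integral_prod _ (by rw [← Measure.volume_eq_prod]; exact hG1i)
    have fub2 : (∫ x : ℝ × ℝ, G2 x) = ∫ b, ∫ a, G2 (a, b) := by
      rw [Measure.volume_eq_prod]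
      exact integral_prod_symm _ (by rw [← Measure.volume_eq_prod]; exact hG2i)
    -- integrability of the 1-d profiles
    have hc1 : Continuous fun a : ℝ => 4 * a * (φ (a, |a|) - φ (a, -|a|)) := by
      exact (continuous_const.mul continuous_id).mul
        ((hφc.comp (continuous_id.prodMk continuous_abs)).sub
         (hφc.comp (continuous_id.prodMk continuous_abs.neg)))
    have hc2 : Continuous fun b : ℝ => -(4 * b) * (φ (|b|, b) - φ (-|b|, b)) := by
      exact (continuous_const.mul continuous_id).neg.mul
        ((hφc.comp (continuous_abs.prodMk continuous_id)).sub
         (hφc.comp (continuous_abs.neg.prodMk continuous_id)))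
    have hh1i : Integrable h1fun := by
      rw [hh1def]
      exact ((hc1.integrableOn_Icc).mono_set Set.Ioo_subset_Icc_self).integrable_indicator
        measurableSet_Ioo
    have hh2i : Integrable h2fun := by
      rw [hh2def]
      exact ((hc2.integrableOn_Icc).mono_set Set.Ioo_subset_Icc_self).integrable_indicator
        measurableSet_Ioo
    -- oddness of the sum
    have odd : ∀ t : ℝ, h1fun (-t) + h2fun (-t) = -(h1fun t + h2fun t) := by
      intro t
      have hmem : -t ∈ Set.Ioo (-(1/2) : ℝ) (1/2) ↔ t ∈ Set.Ioo (-(1/2) : ℝ) (1/2) := by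
        rw [memIoo, memIoo, abs_neg]
      by_cases ht : t ∈ Set.Ioo (-(1/2) : ℝ) (1/2)
      · rw [hh1def, hh2def, Set.indicator_of_mem ht, Set.indicator_of_mem ht,
          Set.indicator_of_mem (hmem.2 ht), Set.indicator_of_mem (hmem.2 ht)]
        simp only [abs_neg]
        rcases le_total 0 t with h | h
        · rw [abs_of_nonneg h]; ring_nf
        · rw [abs_of_nonpos h]; ring_nf
      · rw [hh1def, hh2def, Set.indicator_of_notMem ht, Set.indicator_of_notMem ht,
          Set.indicator_of_notMem (fun h => ht (hmem.1 h)),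
          Set.indicator_of_notMem (fun h => ht (hmem.1 h))]
        ring
    -- conclude
    have hsum : (∫ t, (h1fun t + h2fun t)) = 0 := by
      have h0 : (∫ t, (h1fun t + h2fun t)) = -∫ t, (h1fun t + h2fun t) := by
        conv_lhs => rw [← integral_neg_eq_self (fun t => h1fun t + h2fun t) volume]
        calc (∫ t, (h1fun (-t) + h2fun (-t)))
            = ∫ t, -(h1fun t + h2fun t) := by
              congr 1; funext t; exact odd t
          _ = -∫ t, (h1fun t + h2fun t) := integral_neg _
      linarith
    calc (∫ x : ℝ × ℝ, ((wDP x).1 * D x (1, 0) + (wDP x).2 * D x (0, 1)))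
        = ∫ x : ℝ × ℝ, (G1 x + G2 x) := by congr 1; funext x; exact hFeq x
      _ = (∫ x : ℝ × ℝ, G1 x) + ∫ x : ℝ × ℝ, G2 x := integral_add hG1i hG2i
      _ = (∫ a, h1fun a) + ∫ b, h2fun b := by
          rw [fub1, fub2]
          congr 1
          · congr 1; funext a; exact inner1 a
          · congr 1; funext b; exact inner2 b
      _ = ∫ t, (h1fun t + h2fun t) := (integral_add hh1i hh2i).symm
      _ = 0 := hsum
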